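/- Let u¹, u² ∈ ℝ with u² ≠ 0 and D := (u²)² − u¹u² > 0, and set R = √D. Define the 2×2 matrices g₁ = [[−2u², −u²],[−u², 0]] and g₂ = [[0, u¹u²],[u¹u², 2(u²)²]]. Then det(g₂ − λg₁) = (u²)²(4λu² − (λ + u¹)²), and the two roots of det(g₂ − λg₁) = 0 are the distinct real numbers λ¹ = 2u² − u¹ + 2R and λ² = 2u² − u¹ − 2R. Moreover, with the Jacobian matrix 𝒥 = [[−1 − u²/R, 2 + (2u² − u¹)/R],[−1 + u²/R, 2 − (2u² − u¹)/R]], the matrix 𝒥 g₁ 𝒥ᵀ is diagonal, say diag(f¹, f²), and 𝒥 g₂ 𝒥ᵀ = diag(λ¹f¹, λ²f²). -/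
import Mathlib

set_option maxHeartbeats 1600000

private noncomputable def J' (u1 u2 R : ℝ) : Matrix (Fin 2) (Fin 2) ℝ :=
  !![-1 - u2 / R, 2 + (2 * u2 - u1) / R; -1 + u2 / R, 2 - (2 * u2 - u1) / R]


/-- Canonical coordinates of the dispersionless bihamiltonian structure
of the Ablowitz–Ladik hierarchy: for the leading symbols
`g₁ = [[−2u², −u²],[−u², 0]]`, `g₂ = [[0, u¹u²],[u¹u², 2(u²)²]]` one has
`det(g₂ − λ g₁) = (u²)²(4λu² − (λ + u¹)²)`, the two roots are the distinct real numbers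
`λ¹ = 2u² − u¹ + 2R`, `λ² = 2u² − u¹ − 2R` with `R = √((u²)² − u¹u²)`, the Jacobian `𝒥`
diagonalizes `g₁`, say `𝒥 g₁ 𝒥ᵀ = diag(f¹, f²)`, and `𝒥 g₂ 𝒥ᵀ = diag(λ¹f¹, λ²f²)`. -/
theorem canonical_coordinates_AL
    (u1 u2 : ℝ) (hu2 : u2 ≠ 0) (hD : u2 ^ 2 - u1 * u2 > 0)
    (R : ℝ) (hR : R = Real.sqrt (u2 ^ 2 - u1 * u2))
    (lam1 lam2 : ℝ)
    (hlam1 : lam1 = 2 * u2 - u1 + 2 * R) (hlam2 : lam2 = 2 * u2 - u1 - 2 * R)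
    (g1 g2 J : Matrix (Fin 2) (Fin 2) ℝ)
    (hg1 : g1 = !![-2 * u2, -u2; -u2, 0])
    (hg2 : g2 = !![0, u1 * u2; u1 * u2, 2 * u2 ^ 2])
    (hJ : J = !![-1 - u2 / R, 2 + (2 * u2 - u1) / R;
                 -1 + u2 / R, 2 - (2 * u2 - u1) / R]) :
    (∀ lam : ℝ, (g2 - lam • g1).det = u2 ^ 2 * (4 * lam * u2 - (lam + u1) ^ 2)) ∧
    lam1 ≠ lam2 ∧
    (g2 - lam1 • g1).det = 0 ∧ (g2 - lam2 • g1).det = 0 ∧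
    (J * g1 * J.transpose) 0 1 = 0 ∧ (J * g1 * J.transpose) 1 0 = 0 ∧
    J * g2 * J.transpose =
      !![lam1 * (J * g1 * J.transpose) 0 0, 0;
         0, lam2 * (J * g1 * J.transpose) 1 1] := by
  have hRpos : R > 0 := by rw [hR]; exact Real.sqrt_pos.mpr hD
  have hR2 : R ^ 2 = u2 ^ 2 - u1 * u2 := by
    rw [hR]; exact Real.sq_sqrt hD.le
  have hRne : R ≠ 0 := ne_of_gt hRpos
  have hu1 : u1 = (u2 ^ 2 - R ^ 2) / u2 := by
    field_simp; nlinarith [hR2]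
  subst hg1 hg2 hJ hlam1 hlam2
  have hT : (J' u1 u2 R).transpose
      = !![-1 - u2 / R, -1 + u2 / R; 2 + (2 * u2 - u1) / R, 2 - (2 * u2 - u1) / R] := by
    ext i j; fin_cases i <;> fin_cases j <;> rfl
  have hA : J' u1 u2 R * !![-2 * u2, -u2; -u2, 0] * (J' u1 u2 R).transpose
      = !![2 * (u2 + R) ^ 2 / R, 0; 0, -2 * (u2 - R) ^ 2 / R] := by
    rw [hT]
    ext i j
    fin_cases i <;> fin_cases j <;>
      · simp [J', Matrix.mul_apply, Fin.sum_univ_two]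
        rw [hu1]
        field_simp
        ring
  have hB : J' u1 u2 R * !![0, u1 * u2; u1 * u2, 2 * u2 ^ 2] * (J' u1 u2 R).transpose
      = !![(2 * u2 - u1 + 2 * R) * (2 * (u2 + R) ^ 2 / R), 0;
           0, (2 * u2 - u1 - 2 * R) * (-2 * (u2 - R) ^ 2 / R)] := by
    rw [hT]
    ext i j
    fin_cases i <;> fin_cases j <;>
      · simp [J', Matrix.mul_apply, Fin.sum_univ_two]
        rw [hu1]
        field_simp
        ring
  rw [show (!![-1 - u2 / R, 2 + (2 * u2 - u1) / R; -1 + u2 / R, 2 - (2 * u2 - u1) / R])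
      = J' u1 u2 R from rfl]
  refine ⟨?_, ?_, ?_, ?_, ?_, ?_, ?_⟩
  · intro lam
    simp [Matrix.det_fin_two, Matrix.smul_apply]
    ring
  · intro h; nlinarith [hRpos]
  · simp [Matrix.det_fin_two, Matrix.smul_apply]; nlinarith [hR2]
  · simp [Matrix.det_fin_two, Matrix.smul_apply]; nlinarith [hR2]
  · rw [hA]; simp
  · rw [hA]; simp
  · rw [hB, hA]; simp
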